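/- Let L be a unimodular lattice and M a primitive sublattice of L with orthogonal complement M^⊥ in L. Then (M^⊥)* ⊥ M* = L + M*, and L + M* is the disjoint union of the cosets u + L as u + M ranges over M*/M. -/

import Mathlib

open scoped RealInnerProductSpace

/-- The dual lattice of a set `N` inside its rational span:
`N* = {v ∈ N ⊗ ℚ : ⟪v, u⟫ ∈ ℤ for all u ∈ N}`. -/
def dualLat {n : ℕ} (N : Set (EuclideanSpace ℝ (Fin n))) : Set (EuclideanSpace ℝ (Fin n)) :=
  {v | v ∈ Submodule.span ℚ N ∧ ∀ u ∈ N, ∃ k : ℤ, ⟪v, u⟫ = (k : ℝ)}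

/-!
Orthogonal projection onto `M ⊗ ℝ` maps `L` into `M*`: the projection of `x ∈ L` is rational
(the Gram matrix of `M` is integral and invertible over `ℚ`) and pairs with `M` as `x` does. The
remaining component lies in `(M^⊥)*`, which gives `L + M* ⊆ (M^⊥)* + M*`. Conversely, `M^⊥` is the
kernel of pairing `L` with `M`, so `L / M^⊥` is torsion-free and `M^⊥` is a direct summand of `L`.
Hence every `a ∈ (M^⊥)*` is the restriction to `M^⊥` of an integral functional on `L`, which by
unimodularity is `⟪v, ·⟫` for some `v ∈ L`; since `M` and `M^⊥` together span the space, `v - a` is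
the projection of `v` and lies in `M*`. Finally, `u + L` meets `u' + L` iff `u - u' ∈ L`, and
primitivity identifies `L ∩ M*` with `M`.
-/

section RationalSpan

variable {V : Type*} [AddCommGroup V] [Module ℚ V]

lemma mem_span_rat_of_zsmul_mem {S : Set V} {d : ℤ} (hd : d ≠ 0) {y : V} (h : d • y ∈ S) :
    y ∈ Submodule.span ℚ S := by
  have hy : y = (d : ℚ)⁻¹ • (d • y) := by
    rw [← Int.cast_smul_eq_zsmul ℚ, smul_smul, inv_mul_cancel₀ (by exact_mod_cast hd), one_smul]
  rw [hy]
  exact Submodule.smul_mem _ _ (Submodule.subset_span h)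

lemma exists_zsmul_mem_of_mem_span_rat (M : Submodule ℤ V) {m : V}
    (hm : m ∈ Submodule.span ℚ (M : Set V)) : ∃ d : ℤ, d ≠ 0 ∧ d • m ∈ M := by
  induction hm using Submodule.span_induction with
  | mem u hu => exact ⟨1, one_ne_zero, by rwa [one_smul]⟩
  | zero => exact ⟨1, one_ne_zero, by rw [smul_zero]; exact M.zero_mem⟩
  | add x y _ _ hx hy =>
    obtain ⟨d, hd, hdx⟩ := hx
    obtain ⟨e, he, hey⟩ := hy
    refine ⟨e * d, mul_ne_zero he hd, ?_⟩
    rw [smul_add, mul_smul, mul_comm, mul_smul]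
    exact M.add_mem (M.smul_mem e hdx) (M.smul_mem d hey)
  | smul q x _ hx =>
    obtain ⟨d, hd, hdx⟩ := hx
    refine ⟨q.den * d, mul_ne_zero (by exact_mod_cast q.den_nz) hd, ?_⟩
    have hq : ((q.den * d : ℤ) : ℚ) * q = q.num * d := by
      push_cast
      rw [mul_right_comm, mul_comm (q.den : ℚ), Rat.mul_den_eq_num]
    rw [← Int.cast_smul_eq_zsmul ℚ, smul_smul, hq, mul_smul, Int.cast_smul_eq_zsmul,
      Int.cast_smul_eq_zsmul]
    exact M.smul_mem _ hdx

end RationalSpan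

section InnerProductSpace

variable {E : Type*} [NormedAddCommGroup E] [InnerProductSpace ℝ E]

lemma inner_eq_zero_of_mem_span {K : Type*} [CommSemiring K] [Algebra K ℝ] [Module K E]
    [IsScalarTower K ℝ E] {S : Set E} {w m : E} (h : ∀ u ∈ S, ⟪u, w⟫ = 0)
    (hm : m ∈ Submodule.span K S) : ⟪m, w⟫ = 0 := by
  induction hm using Submodule.span_induction with
  | mem u hu => exact h u hu
  | zero => exact inner_zero_left w
  | add x y _ _ hx hy => rw [inner_add_left, hx, hy, add_zero]
  | smul a x _ hx => rw [← algebraMap_smul ℝ a x, real_inner_smul_left, hx, mul_zero]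

section RationalStructure

variable [Module ℚ E] [IsScalarTower ℚ ℝ E]

open Matrix in
lemma inner_sum_rat_smul_eq_vecMul {ι : Type*} [Fintype ι] {v : ι → E} {g : Matrix ι ι ℚ}
    (hg : ∀ i j, ⟪v i, v j⟫ = g i j) (c : ι → ℚ) (j : ι) :
    ⟪∑ i, c i • v i, v j⟫ = (c ᵥ* g) j := by
  simp only [sum_inner, ← Rat.cast_smul_eq_qsmul ℝ, real_inner_smul_left, hg, Matrix.vecMul,
    dotProduct, Rat.cast_sum, Rat.cast_mul]

open Matrix in
/-- Linear independence over `ℚ` makes the rational Gram matrix invertible, since a vector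
orthogonal to all the `v j` is orthogonal to itself. -/
lemma exists_inner_sum_rat_smul_eq {ι : Type*} [Fintype ι] [DecidableEq ι] {v : ι → E}
    (hv : LinearIndependent ℚ v) {g : Matrix ι ι ℚ} (hg : ∀ i j, ⟪v i, v j⟫ = g i j)
    (t : ι → ℚ) : ∃ c : ι → ℚ, ∀ j, ⟪∑ i, c i • v i, v j⟫ = t j := by
  have hinj : Function.Injective fun c => c ᵥ* g := by
    intro c c' hcc'
    obtain ⟨w, hw⟩ : ∃ w, w = ∑ i, (c - c') i • v i := ⟨_, rfl⟩
    have horth : ∀ j, ⟪w, v j⟫ = 0 := fun j => by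
      rw [hw, inner_sum_rat_smul_eq_vecMul hg, Matrix.sub_vecMul, sub_eq_zero.mpr hcc']
      simp
    have hw0 : ⟪w, w⟫ = 0 := by
      conv_lhs => arg 3; rw [hw]
      simp only [inner_sum, ← Rat.cast_smul_eq_qsmul ℝ, real_inner_smul_right, horth, mul_zero,
        Finset.sum_const_zero]
    have hcoeff := Fintype.linearIndependent_iff.mp hv _ (hw ▸ inner_self_eq_zero.mp hw0)
    exact sub_eq_zero.mp (funext hcoeff)
  obtain ⟨c, hc⟩ := Matrix.vecMul_surjective_iff_isUnit.mpr
    (Matrix.vecMul_injective_iff_isUnit.mp hinj) t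
  exact ⟨c, fun j => by rw [inner_sum_rat_smul_eq_vecMul hg, ← hc]⟩

lemma exists_mem_span_rat_inner_sub_eq_zero {M : Submodule ℤ E} (hM : M.FG)
    (hgram : ∀ u ∈ M, ∀ u' ∈ M, ∃ q : ℚ, ⟪u, u'⟫ = q) {x : E}
    (hx : ∀ u ∈ M, ∃ q : ℚ, ⟪x, u⟫ = q) :
    ∃ m ∈ Submodule.span ℚ (M : Set E), ∀ u ∈ M, ⟪x - m, u⟫ = 0 := by
  classical
  obtain ⟨s, rfl⟩ := hM
  obtain ⟨b, hbs, hbspan, hbind⟩ := exists_linearIndependent ℚ (s : Set E)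
  have := (s.finite_toSet.subset hbs).fintype
  have hbM (i : b) : (i : E) ∈ Submodule.span ℤ (s : Set E) := Submodule.subset_span (hbs i.2)
  choose g hg using fun i j : b => hgram _ (hbM i) _ (hbM j)
  choose t ht using fun j : b => hx _ (hbM j)
  obtain ⟨c, hc⟩ := exists_inner_sum_rat_smul_eq hbind (g := g) hg t
  refine ⟨∑ i, c i • (i : E), Submodule.sum_mem _ fun i _ =>
    Submodule.smul_mem _ _ (Submodule.subset_span (hbM i)), fun u hu => ?_⟩
  have hub : u ∈ Submodule.span ℚ b := by
    rw [hbspan]; exact Submodule.span_le_restrictScalars ℤ ℚ _ hu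
  rw [real_inner_comm]
  refine inner_eq_zero_of_mem_span (fun y hy => ?_) hub
  rw [real_inner_comm, inner_sub_left, ht ⟨y, hy⟩, hc ⟨y, hy⟩, sub_self]

end RationalStructure

lemma discreteTopology_of_inner_self_eq_intCast {L : Submodule ℤ E}
    (hL : ∀ v ∈ L, ∃ k : ℤ, ⟪v, v⟫ = k) : DiscreteTopology L := by
  rw [discreteTopology_iff_isOpen_singleton_zero, Metric.isOpen_singleton_iff]
  refine ⟨1, one_pos, fun ⟨v, hv⟩ hlt => ?_⟩
  obtain ⟨k, hk⟩ := hL v hv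
  have hnorm : ‖v‖ < 1 := by simpa using hlt
  have hk0 : k = 0 := by
    have hlt1 : (k : ℝ) < 1 := by
      rw [← hk, real_inner_self_eq_norm_sq]; nlinarith [norm_nonneg v]
    have hge0 : (0 : ℝ) ≤ k := by rw [← hk]; exact real_inner_self_nonneg
    have : k < 1 := by exact_mod_cast hlt1
    have : 0 ≤ k := by exact_mod_cast hge0
    omega
  rw [hk0, Int.cast_zero, inner_self_eq_zero] at hk
  exact Subtype.ext hk

lemma exists_inner_eq_of_isZLattice [FiniteDimensional ℝ E] (L : Submodule ℤ E)
    [DiscreteTopology L] [IsZLattice ℝ L] (F : L →ₗ[ℤ] ℝ) : ∃ v : E, ∀ x : L, ⟪v, x⟫ = F x := by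
  let b := Module.Free.chooseBasis ℤ L
  let φ : E →ₗ[ℝ] ℝ := (Module.Basis.ofZLatticeBasis ℝ L b).constr ℝ (fun i => F (b i))
  have hφ : (φ.restrictScalars ℤ) ∘ₗ L.subtype = F := b.ext fun i => by
    change φ (b i : E) = F (b i)
    rw [← Module.Basis.ofZLatticeBasis_apply ℝ L b i, Module.Basis.constr_basis]
  refine ⟨(InnerProductSpace.toDual ℝ E).symm (LinearMap.toContinuousLinearMap φ), fun x => ?_⟩
  rw [InnerProductSpace.toDual_symm_apply, ← hφ]
  rfl

end InnerProductSpace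

lemma LinearMap.exists_retraction_ker {L V : Type*} [AddCommGroup L] [Module.Finite ℤ L]
    [AddCommGroup V] [Module.IsTorsionFree ℤ V] (φ : L →ₗ[ℤ] V) :
    ∃ r : L →ₗ[ℤ] L, (∀ x, φ (r x) = 0) ∧ ∀ x, φ x = 0 → r x = x := by
  obtain ⟨σ, hσ⟩ := φ.rangeRestrict.exists_rightInverse_of_surjective φ.range_rangeRestrict
  have hφσ (y : φ.range) : φ (σ y) = y := congrArg Subtype.val (LinearMap.congr_fun hσ y)
  refine ⟨LinearMap.id - σ ∘ₗ φ.rangeRestrict, fun x => ?_, fun x hx => ?_⟩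
  · simp [hφσ]
  · have : φ.rangeRestrict x = 0 := Subtype.ext hx
    simp [this]

section OrthogonalLattice

variable {E : Type*} [NormedAddCommGroup E] [InnerProductSpace ℝ E]

def orthLat (L M : Submodule ℤ E) : Set E := {v | v ∈ L ∧ ∀ u ∈ M, ⟪v, u⟫ = 0}

variable [Module ℚ E] [IsScalarTower ℚ ℝ E] {L M : Submodule ℤ E}

lemma inner_eq_zero_of_mem_span_of_mem_orthLat {m w : E}
    (hm : m ∈ Submodule.span ℚ (M : Set E)) (hw : w ∈ orthLat L M) : ⟪m, w⟫ = 0 :=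
  inner_eq_zero_of_mem_span (fun u hu => by rw [real_inner_comm]; exact hw.2 u hu) hm

lemma exists_decomposition_orthLat (hML : M ≤ L) (hint : ∀ v ∈ L, ∀ u ∈ L, ∃ k : ℤ, ⟪v, u⟫ = k)
    (hM : M.FG) {x : E} (hx : x ∈ L) :
    ∃ m ∈ Submodule.span ℚ (M : Set E),
      x - m ∈ Submodule.span ℚ (orthLat L M) ∧ ∀ u ∈ M, ⟪x - m, u⟫ = 0 := by
  have hrat : ∀ v ∈ L, ∀ u ∈ M, ∃ q : ℚ, ⟪v, u⟫ = q := fun v hv u hu => by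
    obtain ⟨k, hk⟩ := hint v hv u (hML hu)
    exact ⟨k, by rw [hk, Rat.cast_intCast]⟩
  obtain ⟨m, hm, horth⟩ :=
    exists_mem_span_rat_inner_sub_eq_zero hM (fun u hu => hrat u (hML hu)) (hrat x hx)
  obtain ⟨d, hd, hdm⟩ := exists_zsmul_mem_of_mem_span_rat M hm
  refine ⟨m, hm, mem_span_rat_of_zsmul_mem hd ⟨?_, fun u hu => ?_⟩, horth⟩
  · rw [smul_sub]
    exact L.sub_mem (L.smul_mem d hx) (hML hdm)
  · rw [inner_smul_left_eq_smul, horth u hu, smul_zero]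

/-- Every vector of `L` splits into pieces in the rational spans of `M` and of `orthLat L M`,
so together these span the ambient space. -/
lemma eq_zero_of_orthogonal_orthLat [DiscreteTopology L] [IsZLattice ℝ L] (hML : M ≤ L)
    (hint : ∀ v ∈ L, ∀ u ∈ L, ∃ k : ℤ, ⟪v, u⟫ = k) (hM : M.FG) {z : E}
    (hzM : ∀ u ∈ M, ⟪u, z⟫ = 0) (hzN : ∀ w ∈ orthLat L M, ⟪w, z⟫ = 0) : z = 0 := by
  have hzL : ∀ x ∈ L, ⟪x, z⟫ = 0 := fun x hx => by
    obtain ⟨m, hm, hxm, -⟩ := exists_decomposition_orthLat hML hint hM hx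
    rw [← add_sub_cancel m x, inner_add_left, inner_eq_zero_of_mem_span hzM hm,
      inner_eq_zero_of_mem_span hzN hxm, add_zero]
  have hz : z ∈ Submodule.span ℝ (L : Set E) := by
    rw [IsZLattice.span_top]; exact Submodule.mem_top
  exact inner_self_eq_zero.mp (inner_eq_zero_of_mem_span hzL hz)

end OrthogonalLattice

section DualLattice

variable {n : ℕ}

lemma add_mem_dualLat {S : Set (EuclideanSpace ℝ (Fin n))} {x y : EuclideanSpace ℝ (Fin n)}
    (hx : x ∈ dualLat S) (hy : y ∈ dualLat S) : x + y ∈ dualLat S := by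
  refine ⟨Submodule.add_mem _ hx.1 hy.1, fun u hu => ?_⟩
  obtain ⟨k, hk⟩ := hx.2 u hu
  obtain ⟨l, hl⟩ := hy.2 u hu
  exact ⟨k + l, by rw [inner_add_left, hk, hl, Int.cast_add]⟩

lemma sub_mem_dualLat {S : Set (EuclideanSpace ℝ (Fin n))} {x y : EuclideanSpace ℝ (Fin n)}
    (hx : x ∈ dualLat S) (hy : y ∈ dualLat S) : x - y ∈ dualLat S := by
  refine ⟨Submodule.sub_mem _ hx.1 hy.1, fun u hu => ?_⟩
  obtain ⟨k, hk⟩ := hx.2 u hu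
  obtain ⟨l, hl⟩ := hy.2 u hu
  exact ⟨k - l, by rw [inner_sub_left, hk, hl, Int.cast_sub]⟩

variable {L M : Submodule ℤ (EuclideanSpace ℝ (Fin n))}

lemma mem_dualLat_of_inner_sub_eq_zero (hML : M ≤ L)
    (hint : ∀ v ∈ L, ∀ u ∈ L, ∃ k : ℤ, ⟪v, u⟫ = k) {x m : EuclideanSpace ℝ (Fin n)} (hx : x ∈ L)
    (hm : m ∈ Submodule.span ℚ (M : Set (EuclideanSpace ℝ (Fin n))))
    (horth : ∀ u ∈ M, ⟪x - m, u⟫ = 0) :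
    m ∈ dualLat (M : Set (EuclideanSpace ℝ (Fin n))) := by
  refine ⟨hm, fun u hu => ?_⟩
  obtain ⟨k, hk⟩ := hint x hx u (hML hu)
  have h := horth u hu
  rw [inner_sub_left, hk, sub_eq_zero] at h
  exact ⟨k, h.symm⟩

lemma exists_mem_dualLat_sub_mem_dualLat_orthLat (hML : M ≤ L)
    (hint : ∀ v ∈ L, ∀ u ∈ L, ∃ k : ℤ, ⟪v, u⟫ = k) (hM : M.FG) {x : EuclideanSpace ℝ (Fin n)}
    (hx : x ∈ L) :
    ∃ m ∈ dualLat (M : Set (EuclideanSpace ℝ (Fin n))), x - m ∈ dualLat (orthLat L M) := by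
  obtain ⟨m, hm, hxm, horth⟩ := exists_decomposition_orthLat hML hint hM hx
  refine ⟨m, mem_dualLat_of_inner_sub_eq_zero hML hint hx hm horth, hxm, fun w hw => ?_⟩
  obtain ⟨k, hk⟩ := hint x hx w hw.1
  exact ⟨k, by rw [inner_sub_left, inner_eq_zero_of_mem_span_of_mem_orthLat hm hw, hk, sub_zero]⟩

/-- `orthLat L M` is the kernel of pairing `L` with `M`, so it is a direct summand of `L`; hence
`⟪a, ·⟫` extends from it to an integral functional on `L`, which unimodularity realises by some
`v ∈ L`. -/
lemma exists_sub_mem_dualLat_of_mem_dualLat_orthLat [DiscreteTopology L] [IsZLattice ℝ L]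
    (hML : M ≤ L) (huni : ∀ v : EuclideanSpace ℝ (Fin n), v ∈ L ↔ ∀ u ∈ L, ∃ k : ℤ, ⟪v, u⟫ = k)
    (hM : M.FG) {a : EuclideanSpace ℝ (Fin n)} (ha : a ∈ dualLat (orthLat L M)) :
    ∃ v ∈ L, v - a ∈ dualLat (M : Set (EuclideanSpace ℝ (Fin n))) := by
  have hint : ∀ v ∈ L, ∀ u ∈ L, ∃ k : ℤ, ⟪v, u⟫ = k := fun v => (huni v).mp
  have : Module.Finite ℤ L := ZLattice.module_finite ℝ L
  let φ : L →ₗ[ℤ] (M → ℝ) :=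
    LinearMap.pi fun u =>
      ((innerₗ (EuclideanSpace ℝ (Fin n))).flip u).restrictScalars ℤ ∘ₗ L.subtype
  obtain ⟨r, hrφ, hr⟩ := φ.exists_retraction_ker
  have hrN (x : L) : (r x : EuclideanSpace ℝ (Fin n)) ∈ orthLat L M :=
    ⟨(r x).2, fun u hu => congrFun (hrφ x) ⟨u, hu⟩⟩
  obtain ⟨v, hv⟩ :=
    exists_inner_eq_of_isZLattice L ((innerₗ _ a).restrictScalars ℤ ∘ₗ L.subtype ∘ₗ r)
  have hv' (x : L) : ⟪v, x⟫ = ⟪a, r x⟫ := hv x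
  have hvL : v ∈ L := (huni v).mpr fun u hu => by rw [hv' ⟨u, hu⟩]; exact ha.2 _ (hrN _)
  have hvN : ∀ w ∈ orthLat L M, ⟪v, w⟫ = ⟪a, w⟫ := fun w hw => by
    rw [hv' ⟨w, hw.1⟩, hr ⟨w, hw.1⟩ (funext fun u => hw.2 u u.2)]
  obtain ⟨m, hm, -, horth⟩ := exists_decomposition_orthLat hML hint hM hvL
  have hva : v - a = m := by
    rw [← sub_eq_zero]
    refine eq_zero_of_orthogonal_orthLat hML hint hM (fun u hu => ?_) (fun w hw => ?_)
    · have hau : ⟪a, u⟫ = 0 := inner_eq_zero_of_mem_span (fun w hw => hw.2 u hu) ha.1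
      rw [sub_right_comm, real_inner_comm, inner_sub_left, horth u hu, hau, sub_zero]
    · rw [real_inner_comm, inner_sub_left, inner_sub_left, hvN w hw,
        inner_eq_zero_of_mem_span_of_mem_orthLat hm hw, sub_self, sub_zero]
  exact ⟨v, hvL, hva ▸ mem_dualLat_of_inner_sub_eq_zero hML hint hvL hm horth⟩

lemma exists_add_eq_add_iff_sub_mem (hML : M ≤ L)
    (hprim : ∀ v ∈ L, v ∈ Submodule.span ℚ (M : Set (EuclideanSpace ℝ (Fin n))) →
      (∀ u ∈ M, ∃ k : ℤ, ⟪v, u⟫ = k) → v ∈ M)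
    {u u' : EuclideanSpace ℝ (Fin n)} (hu : u ∈ dualLat (M : Set (EuclideanSpace ℝ (Fin n))))
    (hu' : u' ∈ dualLat (M : Set (EuclideanSpace ℝ (Fin n)))) :
    (∃ a ∈ L, ∃ b ∈ L, u + a = u' + b) ↔ u - u' ∈ M := by
  refine ⟨fun ⟨a, ha, b, hb, heq⟩ => ?_, fun h => ⟨0, L.zero_mem, u - u', hML h, by abel⟩⟩
  have huu' : u - u' = b - a := by rw [sub_eq_sub_iff_add_eq_add, heq, add_comm]
  have hdual := sub_mem_dualLat hu hu'
  exact hprim _ (huu' ▸ L.sub_mem hb ha) hdual.1 hdual.2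

end DualLattice

/-- Let `L` be a unimodular lattice and `M` a primitive sublattice with orthogonal
complement `M^⊥` in `L`.  Then `(M^⊥)* ⊥ M* = L + M*`, and the cosets `u + L` for
`u ∈ M*` intersect exactly when `u − u' ∈ M` (so `L + M*` is the disjoint union of the
cosets `u + L`, `u + M ∈ M*/M`). -/
theorem stmt_17 (n : ℕ) (L M : Submodule ℤ (EuclideanSpace ℝ (Fin n)))
    (hfull : Submodule.span ℝ (L : Set (EuclideanSpace ℝ (Fin n))) = ⊤)
    (hML : M ≤ L)
    (huni : ∀ v : EuclideanSpace ℝ (Fin n),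
      v ∈ L ↔ ∀ u ∈ L, ∃ k : ℤ, ⟪v, u⟫ = (k : ℝ))
    (hprim : ∀ v ∈ L, v ∈ Submodule.span ℚ (M : Set (EuclideanSpace ℝ (Fin n))) →
      (∀ u ∈ M, ∃ k : ℤ, ⟪v, u⟫ = (k : ℝ)) → v ∈ M) :
    ({x | ∃ a ∈ dualLat {v | v ∈ L ∧ ∀ u ∈ M, ⟪v, u⟫ = 0},
        ∃ b ∈ dualLat (M : Set (EuclideanSpace ℝ (Fin n))), x = a + b}
      = {x | ∃ a ∈ (L : Set (EuclideanSpace ℝ (Fin n))),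
          ∃ b ∈ dualLat (M : Set (EuclideanSpace ℝ (Fin n))), x = a + b}) ∧
    (∀ u ∈ dualLat (M : Set (EuclideanSpace ℝ (Fin n))),
      ∀ u' ∈ dualLat (M : Set (EuclideanSpace ℝ (Fin n))),
        ((∃ a ∈ L, ∃ b ∈ L, u + a = u' + b) ↔ u - u' ∈ M)) := by
  have hint : ∀ v ∈ L, ∀ u ∈ L, ∃ k : ℤ, ⟪v, u⟫ = k := fun v => (huni v).mp
  have : DiscreteTopology L :=
    discreteTopology_of_inner_self_eq_intCast fun v hv => hint v hv v hv
  have : IsZLattice ℝ L := ⟨hfull⟩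
  have : Module.Finite ℤ L := ZLattice.module_finite ℝ L
  have hM : M.FG := Submodule.FG.of_le_of_isNoetherian hML
  refine ⟨Set.ext fun x => ⟨?_, ?_⟩,
    fun u hu u' hu' => exists_add_eq_add_iff_sub_mem hML hprim hu hu'⟩
  · rintro ⟨a, ha, b, hb, rfl⟩
    obtain ⟨v, hv, hva⟩ := exists_sub_mem_dualLat_of_mem_dualLat_orthLat hML huni hM ha
    exact ⟨v, hv, b - (v - a), sub_mem_dualLat hb hva, by abel⟩
  · rintro ⟨a, ha, b, hb, rfl⟩
    obtain ⟨m, hm, ham⟩ := exists_mem_dualLat_sub_mem_dualLat_orthLat hML hint hM ha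
    exact ⟨a - m, ham, m + b, add_mem_dualLat hm hb, by abel⟩
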